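/- arXiv:1802.00466 — 4 statements merged into one kernel-verified Lean document; each statement's English description precedes it below -/
import Mathlib

section
/- Let g(w) = w + 1 + α/w + O(1/w²) be holomorphic for |w| > R, and let L_{−α}(w) = w − α·log w (principal branch) on the sector S_R = {|w| > R, |Arg w| < 3π/4}. Then the conjugated map ρ = L_{−α} ∘ g ∘ L_{−α}⁻¹, defined on L_{−α}(S_R), has the form ρ(w) = w + 1 + O(1/w^{1+ε}) for some ε > 0. -/
open Complex

/-- The sector `S_R = {w : |w| > R, |Arg w| < 3π/4}`. -/
def fatouSector (R : ℝ) : Set ℂ :=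
  {w : ℂ | R < ‖w‖ ∧ |Complex.arg w| < 3 * Real.pi / 4}

/-!
Write `z = L w` with `w` in the sector. Then `ρ z - z - 1 = L (g w) - L w - 1` equals
`(g w - w - 1 - α / w) - α (log (g w) - log w - (g w - w) / w) - α (g w - w - 1) / w`.
Since `g w / w` is close to `1` and both arguments lie in `(-3π/4, 3π/4)`, the branch of the
logarithm does not jump: `log (g w) - log w = log (g w / w)`, so the middle term is `O(1/w²)`
by the Taylor bound for `log (1 + u)`; the other two terms are `O(1/w²)` by the expansion of `g`.
Finally `|L w| ≤ c |w|`, so `O(1/w²) = O(1/z²)` and `ε = 1` works.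
-/

namespace Complex

theorem arg_div_eq_sub_arg_of_abs_lt {x y : ℂ} (hx : x ≠ 0) (hy : y ≠ 0)
    (h : |arg x - arg y - arg (x / y)| < 2 * Real.pi) : arg (x / y) = arg x - arg y := by
  obtain ⟨k, hk⟩ := Real.Angle.angle_eq_iff_two_pi_dvd_sub.1 (arg_div_coe_angle hx hy)
  have hk' : arg x - arg y - arg (x / y) = -(2 * Real.pi * k) := by simp only at hk; linarith
  have hk0 : k = 0 := by
    rw [hk', abs_neg, abs_mul, abs_of_pos Real.two_pi_pos] at h
    have hk1 : |(k : ℝ)| < 1 := by nlinarith [Real.pi_pos]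
    exact Int.abs_lt_one_iff.1 (by exact_mod_cast hk1)
  rw [hk0, Int.cast_zero, mul_zero, neg_zero] at hk'
  linarith

theorem log_div_eq_sub_log_of_abs_lt {x y : ℂ} (hx : x ≠ 0) (hy : y ≠ 0)
    (h : |arg x - arg y - arg (x / y)| < 2 * Real.pi) : log (x / y) = log x - log y := by
  apply Complex.ext
  · simp only [sub_re, log_re, norm_div]
    exact Real.log_div (norm_ne_zero_iff.2 hx) (norm_ne_zero_iff.2 hy)
  · simpa only [sub_im, log_im] using arg_div_eq_sub_arg_of_abs_lt hx hy h

theorem norm_log_le (w : ℂ) : ‖log w‖ ≤ |Real.log ‖w‖| + Real.pi := by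
  calc ‖log w‖ ≤ |(log w).re| + |(log w).im| := norm_le_abs_re_add_abs_im _
    _ ≤ |Real.log ‖w‖| + Real.pi := by
      rw [log_re, log_im]
      gcongr
      exact abs_arg_le_pi w

theorem norm_log_sub_log_sub_div_le {v w : ℂ} (hw : w ≠ 0)
    (harg : |arg v - arg w| < 3 * Real.pi / 2) (hvw : ‖v - w‖ ≤ ‖w‖ / 2) :
    ‖log v - log w - (v - w) / w‖ ≤ (‖v - w‖ / ‖w‖) ^ 2 := by
  set u := (v - w) / w with hu_def
  have hu : ‖u‖ ≤ 1 / 2 := by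
    rw [norm_div, div_le_iff₀ (norm_pos_iff.2 hw)]
    linarith
  have hvw_eq : v / w = 1 + u := by rw [hu_def]; field_simp; ring
  have hre : 0 < (v / w).re := by
    rw [hvw_eq, add_re, one_re]
    linarith [neg_abs_le u.re, abs_re_le_norm u]
  have hv : v ≠ 0 := by
    rintro rfl
    simp at hre
  have hlog : log v - log w = log (1 + u) := by
    rw [← hvw_eq, log_div_eq_sub_log_of_abs_lt hv hw]
    have := abs_arg_lt_pi_div_two_iff.2 (Or.inl hre)
    calc |arg v - arg w - arg (v / w)| ≤ |arg v - arg w| + |arg (v / w)| := abs_sub _ _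
      _ < 2 * Real.pi := by linarith
  have hinv : (1 - ‖u‖)⁻¹ ≤ 2 := by
    rw [inv_le_comm₀ (by linarith) two_pos]
    linarith
  calc ‖log v - log w - u‖ = ‖log (1 + u) - u‖ := by rw [hlog]
    _ ≤ ‖u‖ ^ 2 * (1 - ‖u‖)⁻¹ / 2 := norm_log_one_add_sub_self_le (by linarith)
    _ ≤ ‖u‖ ^ 2 * 2 / 2 := by gcongr
    _ = (‖v - w‖ / ‖w‖) ^ 2 := by rw [hu_def, norm_div]; ring

end Complex

/-- The map `L_{−α}`. -/
noncomputable def logShift (α w : ℂ) : ℂ := w - α * log w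

theorem norm_logShift_le (α : ℂ) {w : ℂ} (hw : 1 ≤ ‖w‖) :
    ‖logShift α w‖ ≤ (1 + ‖α‖ * (1 + Real.pi)) * ‖w‖ := by
  have hlog : ‖log w‖ ≤ (1 + Real.pi) * ‖w‖ := by
    have hlog_norm : |Real.log ‖w‖| ≤ ‖w‖ := by
      rw [abs_of_nonneg (Real.log_nonneg hw)]
      exact Real.log_le_self (by linarith)
    nlinarith [Complex.norm_log_le w, Real.pi_pos]
  calc ‖logShift α w‖ ≤ ‖w‖ + ‖α‖ * ‖log w‖ := by
        rw [logShift, ← norm_mul]; exact norm_sub_le _ _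
    _ ≤ ‖w‖ + ‖α‖ * ((1 + Real.pi) * ‖w‖) := by gcongr
    _ = (1 + ‖α‖ * (1 + Real.pi)) * ‖w‖ := by ring

theorem norm_logShift_sub_logShift_sub_one_le {α v w : ℂ} {C : ℝ} (hC : 0 ≤ C)
    (hw : 2 * (1 + ‖α‖ + C) ≤ ‖w‖) (harg : |arg v - arg w| < 3 * Real.pi / 2)
    (he : ‖v - w - 1 - α / w‖ ≤ C / ‖w‖ ^ 2) :
    ‖logShift α v - logShift α w - 1‖ ≤
      (C + ‖α‖ * (‖α‖ + C) + ‖α‖ * (1 + ‖α‖ + C) ^ 2) / ‖w‖ ^ 2 := by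
  set e := v - w - 1 - α / w with he_def
  have hw1 : 1 ≤ ‖w‖ := by nlinarith [norm_nonneg α]
  have hw0 : w ≠ 0 := norm_pos_iff.1 (by linarith)
  have he' : ‖e‖ ≤ C / ‖w‖ :=
    he.trans (div_le_div_of_nonneg_left hC (by positivity) (by nlinarith))
  have hew : ‖e + α / w‖ ≤ (‖α‖ + C) / ‖w‖ := by
    refine (norm_add_le _ _).trans ?_
    rw [norm_div, add_div]
    linarith
  have hvw : ‖v - w‖ ≤ 1 + ‖α‖ + C := by
    have : ‖e + α / w‖ ≤ ‖α‖ + C := hew.trans (div_le_self (by positivity) hw1)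
    calc ‖v - w‖ = ‖(e + α / w) + 1‖ := by rw [he_def]; ring_nf
      _ ≤ ‖e + α / w‖ + 1 := by simpa using norm_add_le (e + α / w) 1
      _ ≤ 1 + ‖α‖ + C := by linarith
  have hlog := Complex.norm_log_sub_log_sub_div_le hw0 harg (by linarith)
  have key : logShift α v - logShift α w - 1 =
      e - α * (log v - log w - (v - w) / w) - α * ((e + α / w) / w) := by
    simp only [logShift, he_def]; field_simp; ring
  calc ‖logShift α v - logShift α w - 1‖
      ≤ ‖e‖ + ‖α‖ * ‖log v - log w - (v - w) / w‖ + ‖α‖ * (‖e + α / w‖ / ‖w‖) := by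
        rw [key, ← norm_mul, ← norm_div, ← norm_mul]
        exact norm_sub_le_of_le (norm_sub_le _ _) le_rfl
    _ ≤ C / ‖w‖ ^ 2 + ‖α‖ * ((1 + ‖α‖ + C) / ‖w‖) ^ 2 + ‖α‖ * ((‖α‖ + C) / ‖w‖ / ‖w‖) := by
        gcongr
        exact hlog.trans (by gcongr)
    _ = (C + ‖α‖ * (‖α‖ + C) + ‖α‖ * (1 + ‖α‖ + C) ^ 2) / ‖w‖ ^ 2 := by ring

theorem conjugated_map_form_general (R : ℝ) (hR : 1 < R) (g : ℂ → ℂ) (α : ℂ)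
    (C : ℝ) (hC : 0 < C)
    (hgasym : ∀ w : ℂ, R < ‖w‖ →
      ‖g w - w - 1 - α / w‖ ≤ C / ‖w‖ ^ 2)
    (hgmaps : Set.MapsTo g (fatouSector R) (fatouSector R))
    (L : ℂ → ℂ) (hL : ∀ w, L w = w - α * Complex.log w)
    (Linv : ℂ → ℂ) (hLinv : ∀ w ∈ fatouSector R, Linv (L w) = w) :
    ∃ ε > (0 : ℝ), ∃ C' > (0 : ℝ), ∃ R' ≥ R,
      ∀ z ∈ L '' fatouSector R, R' < ‖z‖ →
        ‖L (g (Linv z)) - z - 1‖ ≤ C' / ‖z‖ ^ (1 + ε) := by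
  obtain rfl : L = logShift α := funext hL
  set K := C + ‖α‖ * (‖α‖ + C) + ‖α‖ * (1 + ‖α‖ + C) ^ 2
  set c := 1 + ‖α‖ * (1 + Real.pi)
  set M := R + 2 * (1 + ‖α‖ + C)
  have hc : 1 ≤ c := by have := Real.pi_pos; simp only [c]; nlinarith [norm_nonneg α]
  refine ⟨1, one_pos, K * c ^ 2, by positivity, c * M, by nlinarith [norm_nonneg α], ?_⟩
  rintro _ ⟨w, ⟨hwR, hwarg⟩, rfl⟩ hz
  rw [hLinv w ⟨hwR, hwarg⟩]
  have hzw := norm_logShift_le α (hR.trans hwR).le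
  have hwM : M < ‖w‖ := lt_of_mul_lt_mul_left (hz.trans_le hzw) (by linarith)
  have harg : |arg (g w) - arg w| < 3 * Real.pi / 2 := by
    have := (hgmaps ⟨hwR, hwarg⟩).2
    calc |arg (g w) - arg w| ≤ |arg (g w)| + |arg w| := abs_sub _ _
      _ < 3 * Real.pi / 2 := by linarith
  have hz0 : 0 < ‖logShift α w‖ := by nlinarith [norm_nonneg α]
  calc ‖logShift α (g w) - logShift α w - 1‖ ≤ K / ‖w‖ ^ 2 :=
        norm_logShift_sub_logShift_sub_one_le hC.le (by linarith) harg (hgasym w hwR)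
    _ = K * c ^ 2 / (c * ‖w‖) ^ 2 := by field_simp
    _ ≤ K * c ^ 2 / ‖logShift α w‖ ^ 2 := by gcongr
    _ = K * c ^ 2 / ‖logShift α w‖ ^ (1 + 1 : ℝ) := by norm_num

/-- If `g(w) = w + 1 + α/w + O(1/w²)` for `|w| > R` and `L(w) = w − α log w`
is injective on the sector `S_R` (with left inverse `Linv` there), then the
conjugated map `ρ = L ∘ g ∘ L⁻¹` has the form `ρ(w) = w + 1 + O(1/w^{1+ε})`
for some `ε > 0`. -/
theorem conjugated_map_form (R : ℝ) (hR : 1 < R) (g : ℂ → ℂ) (α : ℂ)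
    (hg : DifferentiableOn ℂ g {w : ℂ | R < ‖w‖})
    (C : ℝ) (hC : 0 < C)
    (hgasym : ∀ w : ℂ, R < ‖w‖ →
      ‖g w - w - 1 - α / w‖ ≤ C / ‖w‖ ^ 2)
    (hgmaps : Set.MapsTo g (fatouSector R) (fatouSector R))
    (L : ℂ → ℂ) (hL : ∀ w, L w = w - α * Complex.log w)
    (hLinj : Set.InjOn L (fatouSector R))
    (Linv : ℂ → ℂ) (hLinv : ∀ w ∈ fatouSector R, Linv (L w) = w) :
    ∃ ε > (0 : ℝ), ∃ C' > (0 : ℝ), ∃ R' ≥ R,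
      ∀ z ∈ L '' fatouSector R, R' < ‖z‖ →
        ‖L (g (Linv z)) - z - 1‖ ≤ C' / ‖z‖ ^ (1 + ε) :=
  conjugated_map_form_general R hR g α C hC hgasym hgmaps L hL Linv hLinv
end

section
/- For α ∈ ℂ and R sufficiently large, the map L_α(w) = w + α·log w (principal branch) is injective on the sector S_R = {w ∈ ℂ : |w| > R, |Arg w| < 3π/4}. -/
/-!
If `L_α w₁ = L_α w₂` with `|w₁| ≤ |w₂|`, put `u = log w₂ - log w₁`. Then `Re u ≥ 0`,
`|Im u| < 3π/2` and `w₂ - w₁ = w₁ (eᵘ - 1) = -α u`. On that half-strip `|u| ≤ 5 |eᵘ - 1|`,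
so `|w₁| |eᵘ - 1| ≤ 5 |α| |eᵘ - 1|`, which forces `eᵘ = 1`, i.e. `w₁ = w₂`, once `|w₁| > 5 |α|`.
-/

open Complex Real

lemma Complex.norm_exp_sub_one_sq (u : ℂ) :
    ‖exp u - 1‖ ^ 2 = (Real.exp u.re - 1) ^ 2 + 2 * Real.exp u.re * (1 - Real.cos u.im) := by
  rw [Complex.sq_norm, normSq_apply]
  simp only [sub_re, sub_im, exp_re, exp_im, one_re, one_im]
  linear_combination Real.exp u.re ^ 2 * Real.sin_sq_add_cos_sq u.im

lemma Complex.norm_le_five_mul_norm_exp_sub_one {u : ℂ} (hre : 0 ≤ u.re)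
    (him : |u.im| < 3 * π / 2) : ‖u‖ ≤ 5 * ‖exp u - 1‖ := by
  rw [← pow_le_pow_iff_left₀ (norm_nonneg u) (by positivity) two_ne_zero, mul_pow,
    norm_exp_sub_one_sq, Complex.sq_norm, normSq_apply]
  have hπ : π < 3.15 := pi_lt_d2
  have hexp : 1 ≤ Real.exp u.re := Real.one_le_exp hre
  have hre_sq : u.re ^ 2 ≤ (Real.exp u.re - 1) ^ 2 :=
    pow_le_pow_left₀ hre (by linarith [Real.add_one_le_exp u.re]) 2
  have him_sq : u.im ^ 2 < (3 * π / 2) ^ 2 := by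
    rw [← sq_abs]; exact pow_lt_pow_left₀ him (abs_nonneg _) two_ne_zero
  rcases le_or_gt |u.im| π with hsmall | hlarge
  · have hcos := Real.cos_le_one_sub_mul_cos_sq hsmall
    have hc : (1 : ℝ) / 25 ≤ 2 / π ^ 2 := by
      rw [le_div_iff₀ (by positivity)]
      nlinarith [pi_pos]
    nlinarith [mul_le_mul_of_nonneg_right hc (sq_nonneg u.im)]
  · have hcos : Real.cos u.im ≤ 0 := by
      rw [← Real.cos_abs]
      exact Real.cos_nonpos_of_pi_div_two_le_of_le (by linarith [pi_pos]) (by linarith)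
    nlinarith

lemma Complex.eq_of_add_mul_log_eq {α w₁ w₂ : ℂ} (h₁ : 5 * ‖α‖ < ‖w₁‖) (hle : ‖w₁‖ ≤ ‖w₂‖)
    (harg : |arg w₂ - arg w₁| < 3 * π / 2)
    (heq : w₁ + α * log w₁ = w₂ + α * log w₂) : w₁ = w₂ := by
  have hw₁ : 0 < ‖w₁‖ := (by positivity : 0 ≤ 5 * ‖α‖).trans_lt h₁
  have hw₁' : w₁ ≠ 0 := norm_pos_iff.1 hw₁
  have hw₂' : w₂ ≠ 0 := norm_pos_iff.1 (hw₁.trans_le hle)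
  set u := log w₂ - log w₁
  have hre : 0 ≤ u.re := by
    simpa [u, log_re] using Real.log_le_log hw₁ hle
  have him : |u.im| < 3 * π / 2 := by simpa [u, log_im] using harg
  have hdiff : w₂ - w₁ = w₁ * (exp u - 1) := by
    rw [exp_sub, exp_log hw₁', exp_log hw₂']
    field_simp
  have hnorm : ‖w₁‖ * ‖exp u - 1‖ = ‖α‖ * ‖u‖ := by
    rw [← norm_mul, ← norm_mul, ← hdiff, ← norm_neg (α * u)]
    congr 1
    linear_combination -heq
  have hexp : exp u - 1 = 0 := by
    by_contra hne
    have hpos : 0 < ‖exp u - 1‖ := norm_pos_iff.2 hne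
    have := norm_le_five_mul_norm_exp_sub_one hre him
    nlinarith [norm_nonneg α]
  rwa [hexp, mul_zero, sub_eq_zero, eq_comm] at hdiff

/-- For `α ∈ ℂ` and `R` sufficiently large, `L_α(w) = w + α log w`
(principal branch) is injective on the sector `S_R`. -/
theorem Lalpha_injective_on_sector (α : ℂ) :
    ∃ R₀ > (0 : ℝ), ∀ R ≥ R₀,
      Set.InjOn (fun w : ℂ => w + α * Complex.log w) (fatouSector R) := by
  refine ⟨5 * ‖α‖ + 1, by positivity, fun R hR w₁ h₁ w₂ h₂ heq => ?_⟩
  wlog hle : ‖w₁‖ ≤ ‖w₂‖ generalizing w₁ w₂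
  · exact (this w₂ h₂ w₁ h₁ heq.symm (le_of_not_ge hle)).symm
  refine eq_of_add_mul_log_eq (by linarith [h₁.1]) hle ?_ heq
  calc |arg w₂ - arg w₁| ≤ |arg w₂| + |arg w₁| := abs_sub _ _
    _ < 3 * π / 2 := by linarith [h₁.2, h₂.2]
end

section
/- Let ρ be holomorphic on a domain W ⊆ ℂ with ρ(W) ⊆ W, satisfying |ρ(w) − w − 1| ≤ C/|w|^{1+ε} on W for constants C > 0, ε > 0, where W ⊆ {|w| > R, Re(w) > −|Im(w)|} with R large enough that Re(ρⁿ(w)) ≥ Re(w) + n/2 for all n. Then the sequence φ_n(w) = ρⁿ(w) − n converges uniformly on compact subsets of W to a holomorphic map φ satisfying φ(ρ(w)) = φ(w) + 1. -/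
open Filter Topology

/-!
Write `φₙ(w) = ρⁿ(w) − n`. Its increments are `φₙ₊₁(w) − φₙ(w) = ρ(ρⁿ w) − ρⁿ w − 1`, of size
`C / ‖ρⁿ w‖^(1+ε)`, and on a compact set where `Re w ≥ m` the orbit satisfies
`‖ρⁿ w‖ ≥ max R (m + n/2)`. The increments are therefore dominated by a summable sequence
uniformly on compacta, so `φₙ` converges locally uniformly; the limit is holomorphic as a locally
uniform limit of holomorphic maps, and `φₙ(ρ w) = φₙ₊₁(w) + 1` passes to the limit.
-/

theorem tendstoUniformlyOn_of_norm_sub_le {α E : Type*} [NormedAddCommGroup E] [CompleteSpace E]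
    {F : ℕ → α → E} {u : ℕ → ℝ} {s : Set α} (hu : Summable u)
    (hF : ∀ n, ∀ x ∈ s, ‖F (n + 1) x - F n x‖ ≤ u n) :
    TendstoUniformlyOn F (fun x => F 0 x + ∑' n, (F (n + 1) x - F n x)) atTop s := by
  have hsum := tendstoUniformlyOn_tsum_nat hu hF
  rw [Metric.tendstoUniformlyOn_iff] at hsum ⊢
  intro δ hδ
  filter_upwards [hsum δ hδ] with n hn x hx
  rw [← add_sub_cancel (F 0 x) (F n x), ← Finset.sum_range_sub (F · x), dist_add_left]
  exact hn x hx

theorem summable_div_max_rpow (C : ℝ) {R c p : ℝ} (m : ℝ) (hR : 0 < R) (hc : 0 < c)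
    (hp : 1 < p) : Summable fun n : ℕ => C / max R (m + c * n) ^ p := by
  have hsum : Summable fun n : ℕ => |C| * (c / 2) ^ (-p) * (n : ℝ) ^ (-p) :=
    (Real.summable_nat_rpow.2 (by linarith)).mul_left _
  refine hsum.of_norm_bounded_eventually_nat ?_
  filter_upwards [(tendsto_natCast_atTop_atTop (R := ℝ)).eventually_gt_atTop (max 0 (-2 * m / c))]
    with n hn
  have hn0 : 0 < (n : ℝ) := (le_max_left _ _).trans_lt hn
  have hnm : c * n / 2 ≤ m + c * n := by
    have := (le_max_right _ _).trans hn.le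
    rw [div_le_iff₀ hc] at this
    linarith
  have hmax : 0 < max R (m + c * n) := hR.trans_le (le_max_left _ _)
  calc ‖C / max R (m + c * n) ^ p‖ = |C| / max R (m + c * n) ^ p := by
        rw [Real.norm_eq_abs, abs_div, abs_of_pos (Real.rpow_pos_of_pos hmax p)]
    _ ≤ |C| / (c / 2 * n) ^ p := by
        gcongr
        exact le_max_of_le_right (by linarith)
    _ = |C| * (c / 2) ^ (-p) * (n : ℝ) ^ (-p) := by
        rw [Real.mul_rpow (by positivity) hn0.le, Real.rpow_neg (by positivity),
          Real.rpow_neg hn0.le]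
        field_simp

theorem norm_iterate_succ_sub_iterate_sub_one_le {W : Set ℂ} {ρ : ℂ → ℂ}
    (hρmaps : Set.MapsTo ρ W W) {C R p : ℝ} (hC : 0 ≤ C) (hR : 0 < R) (hp : 0 ≤ p)
    (hWR : ∀ w ∈ W, R < ‖w‖) (hbound : ∀ w ∈ W, ‖ρ w - w - 1‖ ≤ C / ‖w‖ ^ p)
    (hgrow : ∀ w ∈ W, ∀ n : ℕ, w.re + n / 2 ≤ (ρ^[n] w).re)
    {x : ℂ} (hx : x ∈ W) {m : ℝ} (hm : m ≤ x.re) (n : ℕ) :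
    ‖ρ^[n + 1] x - ρ^[n] x - 1‖ ≤ C / max R (m + 2⁻¹ * n) ^ p := by
  have hy : ρ^[n] x ∈ W := hρmaps.iterate n hx
  have hnorm : max R (m + 2⁻¹ * n) ≤ ‖ρ^[n] x‖ := by
    refine max_le (hWR _ hy).le ?_
    linarith [hgrow x hx n, Complex.re_le_norm (ρ^[n] x)]
  rw [Function.iterate_succ_apply']
  calc ‖ρ (ρ^[n] x) - ρ^[n] x - 1‖ ≤ C / ‖ρ^[n] x‖ ^ p := hbound _ hy
    _ ≤ C / max R (m + 2⁻¹ * n) ^ p := by gcongr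

theorem eq_add_one_of_tendsto_iterate_sub_natCast {E : Type*} [TopologicalSpace E]
    [AddCommGroupWithOne E] [ContinuousAdd E] [T2Space E] {f : E → E} {x a b : E}
    (hx : Tendsto (fun n : ℕ => f^[n] x - n) atTop (𝓝 a))
    (hfx : Tendsto (fun n : ℕ => f^[n] (f x) - n) atTop (𝓝 b)) : b = a + 1 := by
  have hshift : Tendsto (fun n : ℕ => f^[n + 1] x - (n + 1 : ℕ) + 1) atTop (𝓝 (a + 1)) :=
    (hx.comp (tendsto_add_atTop_nat 1)).add_const 1
  refine tendsto_nhds_unique hfx (hshift.congr fun n => ?_)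
  rw [Function.iterate_succ_apply, Nat.cast_succ]
  abel

/-- Convergence of the incoming Fatou coordinate in one dimension:
if `ρ(w) = w + 1 + O(1/w^{1+ε})` on an invariant domain `W` on which the real
parts of orbits grow linearly, then `φ_n(w) = ρⁿ(w) − n` converges locally
uniformly on `W` to a holomorphic `φ` with `φ(ρ(w)) = φ(w) + 1`. -/
theorem incoming_fatou_coordinate_exists
    (W : Set ℂ) (hW : IsOpen W) (ρ : ℂ → ℂ)
    (hρhol : DifferentiableOn ℂ ρ W) (hρmaps : Set.MapsTo ρ W W)
    (C ε R : ℝ) (hC : 0 < C) (hε : 0 < ε) (hR : 1 < R)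
    (hWsub : W ⊆ {w : ℂ | R < ‖w‖ ∧ -|w.im| < w.re})
    (hbound : ∀ w ∈ W, ‖ρ w - w - 1‖ ≤ C / ‖w‖ ^ (1 + ε))
    (hgrow : ∀ w ∈ W, ∀ n : ℕ, w.re + n / 2 ≤ (ρ^[n] w).re) :
    ∃ φ : ℂ → ℂ,
      TendstoLocallyUniformlyOn (fun (n : ℕ) (w : ℂ) => ρ^[n] w - n) φ atTop W ∧
      DifferentiableOn ℂ φ W ∧
      ∀ w ∈ W, φ (ρ w) = φ w + 1 := by
  have hR0 : 0 < R := zero_lt_one.trans hR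
  have hp : 1 < 1 + ε := lt_add_of_pos_right 1 hε
  set F : ℕ → ℂ → ℂ := fun n w => ρ^[n] w - n
  have hlim : TendstoLocallyUniformlyOn F (fun w => F 0 w + ∑' n, (F (n + 1) w - F n w))
      atTop W := by
    refine (tendstoLocallyUniformlyOn_iff_forall_isCompact hW).2 fun K hKW hK => ?_
    obtain ⟨m, hm⟩ := hK.bddBelow_image Complex.continuous_re.continuousOn
    refine tendstoUniformlyOn_of_norm_sub_le
      (summable_div_max_rpow C m hR0 (by norm_num : (0 : ℝ) < 2⁻¹) hp) fun n x hx => ?_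
    have hFsucc : F (n + 1) x - F n x = ρ^[n + 1] x - ρ^[n] x - 1 := by
      simp only [F, Nat.cast_succ]; ring
    rw [hFsucc]
    exact norm_iterate_succ_sub_iterate_sub_one_le hρmaps hC.le hR0 (zero_le_one.trans hp.le)
      (fun w hw => (hWsub hw).1) hbound hgrow (hKW hx) (hm ⟨x, hx, rfl⟩) n
  refine ⟨_, hlim, hlim.differentiableOn (Eventually.of_forall fun n => ?_) hW,
    fun w hw => ?_⟩
  · exact (hρhol.iterate hρmaps n).sub_const _
  · exact eq_add_one_of_tendsto_iterate_sub_natCast (hlim.tendsto_at hw)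
      (hlim.tendsto_at (hρmaps hw))
end

section
/- Let ρ(u) = u + 1 + O(1/u) be holomorphic on {|u| > R}. Then there exists a holomorphic injective map ψ : S_R → ℂ of the form ψ(u) = u + O(log u) such that ψ⁻¹∘ρ∘ψ(u) = u + 1 on S_R = {|u| > R', |Arg u| < 3π/4} for some R' ≥ R. -/
open Asymptotics Filter Metric Set Topology NNReal

/-!
On the petal `M < re u + 2 |im u|` the map `ρ` raises `re u + 2 |im u|` by at least `1 / 2`,
so orbits escape to infinity linearly. Cauchy estimates make `ρ - id` Lipschitz with constant
`O(1 / s ^ 2)` at radius `s`, which is summable along orbits: the differences `ρⁿ u - ρⁿ b`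
converge, and their limit `α`, the Fatou coordinate, is holomorphic, satisfies `α ∘ ρ = α + 1`,
and `α - id` is `1 / 2`-Lipschitz. Summing the `O(1 / n)` steps of an orbit gives
`α u = u + O(log u)`. A large sector lies in the petal together with the balls `B(w, |w| / 10)`,
so `α` covers it, and the holomorphic inverse `ψ = α⁻¹` conjugates `ρ` to `u ↦ u + 1` there.
-/

section Telescoping

variable {E : Type*} [SeminormedAddCommGroup E] {x : ℕ → E} {φ : ℕ → ℝ}

theorem norm_sub_le_of_norm_succ_sub_le (hφ : Antitone φ) (hφ_nonneg : ∀ n, 0 ≤ φ n)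
    (hφ₀ : φ 0 ≤ 1 / 2) (hx : ∀ n, ‖x (n + 1) - x n‖ ≤ (φ n - φ (n + 1)) * ‖x n‖)
    {n m : ℕ} (hnm : n ≤ m) : ‖x m - x n‖ ≤ 2 * ‖x 0‖ * (φ n - φ m) := by
  induction m generalizing n with
  | zero => obtain rfl := Nat.le_zero.mp hnm; simp
  | succ m ih =>
    rcases hnm.lt_or_eq with hnm | rfl
    · have hxm : ‖x m‖ ≤ 2 * ‖x 0‖ := by
        have hm := ih (Nat.zero_le m)
        have htri := norm_le_norm_add_norm_sub' (x m) (x 0)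
        nlinarith [hφ_nonneg m, norm_nonneg (x 0)]
      calc ‖x (m + 1) - x n‖ ≤ ‖x (m + 1) - x m‖ + ‖x m - x n‖ :=
            norm_sub_le_norm_sub_add_norm_sub _ _ _
        _ ≤ (φ m - φ (m + 1)) * (2 * ‖x 0‖) + 2 * ‖x 0‖ * (φ n - φ m) := by
          gcongr
          · exact (hx m).trans (by gcongr; exact sub_nonneg.2 (hφ m.le_succ))
          · exact ih (Nat.lt_succ_iff.mp hnm)
        _ = 2 * ‖x 0‖ * (φ n - φ (m + 1)) := by ring
    · simp

theorem cauchySeq_of_norm_succ_sub_le (hφ : Antitone φ) (hφ_lim : Tendsto φ atTop (𝓝 0))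
    (hφ₀ : φ 0 ≤ 1 / 2) (hx : ∀ n, ‖x (n + 1) - x n‖ ≤ (φ n - φ (n + 1)) * ‖x n‖) :
    CauchySeq x := by
  have hφ_nonneg := hφ.le_of_tendsto hφ_lim
  refine cauchySeq_of_le_tendsto_0 (fun N ↦ 2 * ‖x 0‖ * φ N) (fun n m N hn hm ↦ ?_)
    (by simpa using hφ_lim.const_mul (2 * ‖x 0‖))
  wlog hnm : n ≤ m generalizing n m
  · rw [dist_comm]; exact this m n hm hn (le_of_not_ge hnm)
  rw [dist_comm, dist_eq_norm]
  calc ‖x m - x n‖ ≤ 2 * ‖x 0‖ * (φ n - φ m) :=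
        norm_sub_le_of_norm_succ_sub_le hφ hφ_nonneg hφ₀ hx hnm
    _ ≤ 2 * ‖x 0‖ * φ N := by gcongr; linarith [hφ hn, hφ_nonneg m]

theorem norm_sub_le_of_tendsto_of_norm_succ_sub_le (hφ : Antitone φ)
    (hφ_lim : Tendsto φ atTop (𝓝 0)) (hφ₀ : φ 0 ≤ 1 / 2)
    (hx : ∀ n, ‖x (n + 1) - x n‖ ≤ (φ n - φ (n + 1)) * ‖x n‖) {l : E}
    (hl : Tendsto x atTop (𝓝 l)) (n : ℕ) : ‖l - x n‖ ≤ 2 * ‖x 0‖ * φ n := by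
  have hφ_nonneg := hφ.le_of_tendsto hφ_lim
  refine le_of_tendsto (hl.sub_const (x n)).norm ?_
  filter_upwards [eventually_ge_atTop n] with m hm
  calc ‖x m - x n‖ ≤ 2 * ‖x 0‖ * (φ n - φ m) :=
        norm_sub_le_of_norm_succ_sub_le hφ hφ_nonneg hφ₀ hx hm
    _ ≤ 2 * ‖x 0‖ * φ n := by gcongr; linarith [hφ_nonneg m]

end Telescoping

theorem sum_range_inv_add_le_log {a : ℝ} (ha : 0 < a) (N : ℕ) :
    ∑ k ∈ Finset.range N, (a + k + 1)⁻¹ ≤ Real.log (a + N) - Real.log a := by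
  induction N with
  | zero => simp
  | succ N ih =>
    rw [Finset.sum_range_succ]
    have hpos : 0 < a + N := by positivity
    have hgap := Real.one_sub_inv_le_log_of_pos (show 0 < (a + N + 1) / (a + N) by positivity)
    rw [Real.log_div (by positivity) hpos.ne', inv_div] at hgap
    have hinv : 1 - (a + N) / (a + N + 1) = (a + N + 1)⁻¹ := by field_simp; ring
    push_cast
    rw [← add_assoc]
    linarith

theorem eventually_mul_one_add_log_le (A : ℝ) {c : ℝ} (hc : 0 < c) :
    ∀ᶠ t in atTop, A * (1 + Real.log (1 + t)) ≤ c * t := by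
  have hlog : (fun t : ℝ ↦ Real.log (1 + t)) =o[atTop] id :=
    (Real.isLittleO_log_id_atTop.comp_tendsto (tendsto_atTop_add_const_left _ 1 tendsto_id))
      |>.trans_isBigO ((isLittleO_const_id_atTop (1 : ℝ)).isBigO.add (isBigO_refl _ _))
  have hbound := (((isLittleO_const_id_atTop (1 : ℝ)).add hlog).const_mul_left A).bound hc
  filter_upwards [hbound, eventually_ge_atTop 0] with t ht ht0
  simp only [Real.norm_eq_abs, id, abs_of_nonneg ht0] at ht
  exact (le_abs_self _).trans ht

theorem one_add_log_one_add_norm_le {w : ℂ} (hw : 1 ≤ ‖w‖) :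
    1 + Real.log (1 + ‖w‖) ≤ 2 * (1 + ‖Complex.log w‖) := by
  have h2 : Real.log (1 + ‖w‖) ≤ Real.log 2 + Real.log ‖w‖ := by
    rw [← Real.log_mul two_ne_zero (by positivity)]
    exact Real.log_le_log (by positivity) (by linarith)
  have hre : Real.log ‖w‖ ≤ ‖Complex.log w‖ := by
    rw [← Complex.log_re]; exact (le_abs_self _).trans (Complex.abs_re_le_norm _)
  linarith [Real.log_two_lt_d9, norm_nonneg (Complex.log w)]

section CauchyEstimate

variable {E : Type*} [NormedAddCommGroup E] [NormedSpace ℂ E] {f : ℂ → E} {R C : ℝ}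

theorem norm_deriv_le_of_norm_le_div_norm (hR : 0 ≤ R) (hC : 0 ≤ C)
    (hf : DifferentiableOn ℂ f {z | R < ‖z‖}) (hfC : ∀ z, R < ‖z‖ → ‖f z‖ ≤ C / ‖z‖)
    {z : ℂ} (hz : 2 * R < ‖z‖) : ‖deriv f z‖ ≤ 4 * C / ‖z‖ ^ 2 := by
  have hz0 : 0 < ‖z‖ := by linarith
  have hball : ∀ w ∈ closedBall z (‖z‖ / 2), ‖z‖ / 2 ≤ ‖w‖ := fun w hw ↦ by
    rw [mem_closedBall, dist_eq_norm, norm_sub_rev] at hw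
    linarith [norm_sub_norm_le z w]
  have hd : DiffContOnCl ℂ f (ball z (‖z‖ / 2)) := by
    refine DifferentiableOn.diffContOnCl ?_
    rw [closure_ball z (by positivity)]
    exact hf.mono fun w hw ↦ show R < ‖w‖ by linarith [hball w hw]
  have hsphere : ∀ w ∈ sphere z (‖z‖ / 2), ‖f w‖ ≤ 2 * C / ‖z‖ := fun w hw ↦ by
    have hw := hball w (sphere_subset_closedBall hw)
    calc ‖f w‖ ≤ C / ‖w‖ := hfC w (by linarith)
      _ ≤ C / (‖z‖ / 2) := by gcongr
      _ = 2 * C / ‖z‖ := by field_simp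
  calc ‖deriv f z‖ ≤ 2 * C / ‖z‖ / (‖z‖ / 2) :=
        Complex.norm_deriv_le_of_forall_mem_sphere_norm_le (by positivity) hd hsphere
    _ = 4 * C / ‖z‖ ^ 2 := by field_simp; ring

theorem norm_sub_le_of_norm_le_div_norm (hR : 0 ≤ R) (hC : 0 ≤ C)
    (hf : DifferentiableOn ℂ f {z | R < ‖z‖}) (hfC : ∀ z, R < ‖z‖ → ‖f z‖ ≤ C / ‖z‖)
    {s : ℝ} (hs : 8 * R < s) {a b : ℂ} (ha : s ≤ ‖a‖) (hb : s ≤ ‖b‖) :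
    ‖f a - f b‖ ≤ 64 * C / s ^ 2 * ‖a - b‖ := by
  have hs0 : 0 < s := by linarith
  by_cases hseg : ∀ z ∈ segment ℝ b a, s / 4 ≤ ‖z‖
  · have hdiff : ∀ z ∈ segment ℝ b a, DifferentiableAt ℂ f z := fun z hz ↦
      hf.differentiableAt <| (isOpen_lt continuous_const continuous_norm).mem_nhds
        (show R < ‖z‖ by linarith [hseg z hz])
    have hderiv : ∀ z ∈ segment ℝ b a, ‖deriv f z‖ ≤ 64 * C / s ^ 2 := fun z hz ↦ by
      have hz := hseg z hz
      calc ‖deriv f z‖ ≤ 4 * C / ‖z‖ ^ 2 :=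
            norm_deriv_le_of_norm_le_div_norm hR hC hf hfC (by linarith)
        _ ≤ 4 * C / (s / 4) ^ 2 := by gcongr
        _ = 64 * C / s ^ 2 := by ring
    simpa using (convex_segment b a).norm_image_sub_le_of_norm_deriv_le hdiff hderiv
      (left_mem_segment ℝ b a) (right_mem_segment ℝ b a)
  · -- the segment passes near `0`, so `a` and `b` are far apart and the crude bound suffices
    push Not at hseg
    obtain ⟨z, hz, hzs⟩ := hseg
    have hzb : ‖b - z‖ ≤ ‖a - b‖ := by
      simpa [dist_eq_norm, norm_sub_rev] using segment_subset_closedBall_left b a hz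
    have hab : 3 * s / 4 ≤ ‖a - b‖ := by linarith [norm_sub_norm_le b z]
    have hfs : ∀ y : ℂ, s ≤ ‖y‖ → ‖f y‖ ≤ C / s := fun y hy ↦
      (hfC y (by linarith)).trans (by gcongr)
    calc ‖f a - f b‖ ≤ ‖f a‖ + ‖f b‖ := norm_sub_le _ _
      _ ≤ C / s + C / s := add_le_add (hfs a ha) (hfs b hb)
      _ ≤ 64 * C / s ^ 2 * (3 * s / 4) := by
        rw [show 64 * C / s ^ 2 * (3 * s / 4) = 48 * (C / s) by field_simp; ring]
        linarith [div_nonneg hC hs0.le]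
      _ ≤ 64 * C / s ^ 2 * ‖a - b‖ := by gcongr

end CauchyEstimate

section NearIdentity

variable {𝕜 E : Type*} [NontriviallyNormedField 𝕜] [NormedAddCommGroup E] [NormedSpace 𝕜 E]
  {s : Set E} {c : ℝ≥0}

theorem ApproximatesLinearOn.one_sub_mul_norm_sub_le {f : E → E}
    (hf : ApproximatesLinearOn f (ContinuousLinearMap.id 𝕜 E) s c) {x y : E} (hx : x ∈ s)
    (hy : y ∈ s) : (1 - c) * ‖x - y‖ ≤ ‖f x - f y‖ := by
  have happrox : ‖f x - f y - (x - y)‖ ≤ c * ‖x - y‖ := hf x hx y hy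
  have htri := norm_sub_norm_le (x - y) (f x - f y)
  rw [norm_sub_rev (x - y)] at htri
  linarith

theorem ApproximatesLinearOn.closedBall_subset_image [CompleteSpace E] [Nontrivial E]
    {f : E → E} (hf : ApproximatesLinearOn f (ContinuousLinearMap.id 𝕜 E) s c) {b : E} {ε : ℝ}
    (hε : 0 ≤ ε) (hbs : closedBall b ε ⊆ s) : closedBall (f b) ((1 - c) * ε) ⊆ f '' s := by
  have hsurj := hf.surjOn_closedBall_of_nonlinearRightInverse
    (ContinuousLinearEquiv.refl 𝕜 E).toNonlinearRightInverse hε hbs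
  simp only [ContinuousLinearEquiv.toNonlinearRightInverse, ContinuousLinearEquiv.refl_symm,
    ContinuousLinearEquiv.coe_refl, ContinuousLinearMap.nnnorm_id, inv_one, NNReal.coe_one] at hsurj
  exact hsurj.mono hbs subset_rfl

theorem ApproximatesLinearOn.exists_invOn_differentiableOn [CompleteSpace 𝕜] {f : 𝕜 → 𝕜}
    {s : Set 𝕜} (hf : ApproximatesLinearOn f (ContinuousLinearMap.id 𝕜 𝕜) s c) (hc : c < 1)
    (hs : IsOpen s) (hfd : DifferentiableOn 𝕜 f s) :
    ∃ g : 𝕜 → 𝕜, InvOn g f s (f '' s) ∧ MapsTo g (f '' s) s ∧ DifferentiableOn 𝕜 g (f '' s) := by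
  let e := ApproximatesLinearOn.toOpenPartialHomeomorph (f' := ContinuousLinearEquiv.refl 𝕜 𝕜)
    f s hf (Or.inr (by simpa using hc)) hs
  refine ⟨e.symm, ⟨fun x hx ↦ e.left_inv hx, fun y hy ↦ e.right_inv hy⟩,
    fun y hy ↦ e.map_target hy, fun y hy ↦ ?_⟩
  have hx : s ∈ 𝓝 (e.symm y) := hs.mem_nhds (e.map_target hy)
  have hd := (hfd.differentiableAt hx).hasDerivAt
  have hd1 : ‖deriv f (e.symm y) - 1‖ ≤ c :=
    (hd.sub (hasDerivAt_id _)).le_of_lipschitzOn hx (approximatesLinearOn_iff_lipschitzOnWith.1 hf)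
  have hne : deriv f (e.symm y) ≠ 0 := fun h0 ↦ by
    rw [h0, zero_sub, norm_neg, norm_one] at hd1
    exact absurd hc (not_lt.2 (by exact_mod_cast hd1))
  exact (e.hasDerivAt_symm hy hne hd).differentiableAt.differentiableWithinAt

end NearIdentity

section Petal

def petalHeight (u : ℂ) : ℝ := u.re + 2 * |u.im|

def petal (M : ℝ) : Set ℂ := {u | M < petalHeight u}

theorem petalHeight_le (u : ℂ) : petalHeight u ≤ 3 * ‖u‖ := by
  have hre := Complex.re_le_norm u
  have him := Complex.abs_im_le_norm u
  unfold petalHeight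
  linarith

theorem petalHeight_sub_le (u v : ℂ) : petalHeight u - petalHeight v ≤ 3 * ‖u - v‖ := by
  have hre : u.re - v.re ≤ ‖u - v‖ := by simpa using Complex.re_le_norm (u - v)
  have him : |u.im| - |v.im| ≤ ‖u - v‖ :=
    (abs_sub_abs_le_abs_sub _ _).trans (by simpa using Complex.abs_im_le_norm (u - v))
  unfold petalHeight
  linarith

theorem petalHeight_add_one (u : ℂ) : petalHeight (u + 1) = petalHeight u + 1 := by
  simp only [petalHeight, Complex.add_re, Complex.one_re, Complex.add_im, Complex.one_im, add_zero]
  ring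

theorem isOpen_petal (M : ℝ) : IsOpen (petal M) :=
  isOpen_lt continuous_const (by unfold petalHeight; fun_prop)

theorem lt_norm_of_mem_petal {M : ℝ} {u : ℂ} (hu : u ∈ petal M) : M / 3 < ‖u‖ := by
  have hu' : M < petalHeight u := hu
  linarith [petalHeight_le u]

theorem one_half_lt_cos_add_two_mul_sin {t : ℝ} (ht₀ : 0 ≤ t) (ht : t < 3 * Real.pi / 4) :
    1 / 2 < Real.cos t + 2 * Real.sin t := by
  have hsin : 0 ≤ Real.sin t := Real.sin_nonneg_of_nonneg_of_le_pi ht₀ (by linarith [Real.pi_pos])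
  rcases le_or_gt t (Real.pi / 2) with h | h
  · have hcos : 0 ≤ Real.cos t := Real.cos_nonneg_of_mem_Icc ⟨by linarith [Real.pi_pos], h⟩
    nlinarith [Real.sin_sq_add_cos_sq t]
  · have hc : -(√2 / 2) < Real.cos t := by
      rw [← Real.cos_pi_div_four, ← Real.cos_pi_sub]
      exact Real.cos_lt_cos_of_nonneg_of_le_pi ht₀ (by linarith) (by linarith)
    have hs : √2 / 2 < Real.sin t := by
      rw [← Real.cos_pi_div_four, ← Real.cos_sub_pi_div_two]
      exact Real.cos_lt_cos_of_nonneg_of_le_pi (by linarith) (by linarith) (by linarith)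
    nlinarith [Real.one_lt_sqrt_two]

theorem half_norm_lt_petalHeight {R' : ℝ} (hR' : 0 ≤ R') {w : ℂ} (hw : w ∈ fatouSector R') :
    ‖w‖ / 2 < petalHeight w := by
  have hw0 : 0 < ‖w‖ := hR'.trans_lt hw.1
  have hθ : |w.arg| ≤ Real.pi := abs_le.2 ⟨(Complex.neg_pi_lt_arg w).le, Complex.arg_le_pi w⟩
  have hheight : petalHeight w = ‖w‖ * (Real.cos |w.arg| + 2 * Real.sin |w.arg|) := by
    rw [petalHeight, Real.cos_abs, ← Real.abs_sin_eq_sin_abs_of_abs_le_pi hθ,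
      ← Complex.norm_mul_cos_arg, ← Complex.norm_mul_sin_arg, abs_mul, abs_norm]
    ring
  rw [hheight]
  nlinarith [one_half_lt_cos_add_two_mul_sin (abs_nonneg w.arg) hw.2]

theorem closedBall_subset_petal {M R' : ℝ} (hM : 0 ≤ M) (hR' : 5 * M ≤ R') {w : ℂ}
    (hw : w ∈ fatouSector R') : closedBall w (‖w‖ / 10) ⊆ petal M := fun v hv ↦ by
  rw [mem_closedBall, dist_comm, dist_eq_norm] at hv
  have hhalf := half_norm_lt_petalHeight (by linarith) hw
  have hwv := petalHeight_sub_le w v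
  show M < petalHeight v
  linarith [hw.1]

end Petal

/-- `24 * R < M` keeps every orbit in `petal M` at radius `> 8 * R`, where `ρ - id` is Lipschitz
(`norm_sub_le_of_norm_le_div_norm`); `9216 * C + 1 ≤ M` makes `fatouTail C M 0 ≤ 1 / 4`. -/
structure FatouSetup (ρ : ℂ → ℂ) (R C M : ℝ) : Prop where
  R_nonneg : 0 ≤ R
  C_nonneg : 0 ≤ C
  differentiableOn : DifferentiableOn ℂ ρ {u | R < ‖u‖}
  norm_sub_sub_le : ∀ u, R < ‖u‖ → ‖ρ u - u - 1‖ ≤ C / ‖u‖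
  lt_M : 24 * R < M
  le_M : 9216 * C + 1 ≤ M

/-- `2304 = 64 * 6 ^ 2`: at time `n` an orbit has radius `≥ (2 * M + n) / 6`. -/
noncomputable def fatouTail (C M : ℝ) (n : ℕ) : ℝ := 2304 * C / (2 * M + n - 1)

theorem tendsto_fatouTail (C M : ℝ) : Tendsto (fatouTail C M) atTop (𝓝 0) :=
  tendsto_const_nhds.div_atTop <| tendsto_atTop_add_const_right _ _ <|
    tendsto_atTop_add_const_left _ _ tendsto_natCast_atTop_atTop

namespace FatouSetup

variable {ρ : ℂ → ℂ} {R C M : ℝ} {u v : ℂ}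

theorem one_le_M (h : FatouSetup ρ R C M) : 1 ≤ M := by linarith [h.le_M, h.C_nonneg]

theorem petal_subset (h : FatouSetup ρ R C M) : petal M ⊆ {u | R < ‖u‖} := fun u hu ↦ by
  show R < ‖u‖
  linarith [lt_norm_of_mem_petal hu, h.lt_M, h.R_nonneg]

theorem petalHeight_add_half_le (h : FatouSetup ρ R C M) (hu : u ∈ petal M) :
    petalHeight u + 1 / 2 ≤ petalHeight (ρ u) := by
  have hnorm := lt_norm_of_mem_petal hu
  have hstep : ‖ρ u - u - 1‖ ≤ 1 / 6 := (h.norm_sub_sub_le u (h.petal_subset hu)).trans <| by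
    rw [div_le_iff₀ (by linarith [h.one_le_M])]
    linarith [h.le_M, h.C_nonneg]
  have hlip := petalHeight_sub_le (u + 1) (ρ u)
  rw [petalHeight_add_one, norm_sub_rev, sub_add_eq_sub_sub] at hlip
  linarith

theorem mapsTo (h : FatouSetup ρ R C M) : MapsTo ρ (petal M) (petal M) := fun u hu ↦ by
  have hu' : M < petalHeight u := hu
  show M < petalHeight (ρ u)
  linarith [h.petalHeight_add_half_le hu]

theorem petalHeight_iterate (h : FatouSetup ρ R C M) (hu : u ∈ petal M) (n : ℕ) :
    petalHeight u + n / 2 ≤ petalHeight (ρ^[n] u) := by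
  induction n with
  | zero => simp
  | succ n ih =>
    rw [Function.iterate_succ_apply']
    have hstep := h.petalHeight_add_half_le (h.mapsTo.iterate n hu)
    push_cast
    linarith

theorem norm_iterate_gt (h : FatouSetup ρ R C M) (hu : u ∈ petal M) (n : ℕ) :
    (2 * M + n) / 6 < ‖ρ^[n] u‖ := by
  have hu' : M < petalHeight u := hu
  linarith [h.petalHeight_iterate hu n, petalHeight_le (ρ^[n] u)]

theorem norm_iterate_succ_sub_sub_le (h : FatouSetup ρ R C M) (hu : u ∈ petal M) (n : ℕ) :
    ‖ρ^[n + 1] u - ρ^[n] u - 1‖ ≤ 6 * C / (2 * M + n) := by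
  have hn := h.norm_iterate_gt hu n
  have hpos : 0 < (2 * M + n) / 6 := by linarith [h.one_le_M, n.cast_nonneg (α := ℝ)]
  rw [Function.iterate_succ_apply']
  calc ‖ρ (ρ^[n] u) - ρ^[n] u - 1‖ ≤ C / ‖ρ^[n] u‖ :=
        h.norm_sub_sub_le _ (h.petal_subset (h.mapsTo.iterate n hu))
    _ ≤ C / ((2 * M + n) / 6) := by gcongr; exact h.C_nonneg
    _ = 6 * C / (2 * M + n) := by field_simp

theorem antitone_fatouTail (h : FatouSetup ρ R C M) : Antitone (fatouTail C M) :=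
  fun n m hnm ↦ by
    have hnm' : (n : ℝ) ≤ m := by exact_mod_cast hnm
    unfold fatouTail
    gcongr
    · linarith [h.C_nonneg]
    · linarith [h.one_le_M, n.cast_nonneg (α := ℝ)]

theorem fatouTail_zero_le (h : FatouSetup ρ R C M) : fatouTail C M 0 ≤ 1 / 4 := by
  unfold fatouTail
  rw [Nat.cast_zero, add_zero, div_le_iff₀ (by linarith [h.one_le_M])]
  linarith [h.le_M, h.C_nonneg]

theorem norm_iterate_sub_succ_le (h : FatouSetup ρ R C M) (hu : u ∈ petal M) (hv : v ∈ petal M)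
    (n : ℕ) : ‖(ρ^[n + 1] u - ρ^[n + 1] v) - (ρ^[n] u - ρ^[n] v)‖ ≤
      (fatouTail C M n - fatouTail C M (n + 1)) * ‖ρ^[n] u - ρ^[n] v‖ := by
  have hdiff : DifferentiableOn ℂ (fun z ↦ ρ z - z - 1) {z | R < ‖z‖} :=
    (h.differentiableOn.sub differentiableOn_id).sub_const 1
  have hlip := norm_sub_le_of_norm_le_div_norm h.R_nonneg h.C_nonneg hdiff h.norm_sub_sub_le
    (by linarith [h.lt_M, n.cast_nonneg (α := ℝ)] : 8 * R < (2 * M + n) / 6)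
    (h.norm_iterate_gt hu n).le (h.norm_iterate_gt hv n).le
  have ha : 0 < 2 * M + n - 1 := by linarith [h.one_le_M, n.cast_nonneg (α := ℝ)]
  have htail : 64 * C / ((2 * M + n) / 6) ^ 2 ≤ fatouTail C M n - fatouTail C M (n + 1) := by
    have hb : 0 < 2 * M + n := by linarith
    have hsub : fatouTail C M n - fatouTail C M (n + 1) =
        2304 * C / ((2 * M + n - 1) * (2 * M + n)) := by
      unfold fatouTail
      rw [Nat.cast_succ, show 2 * M + (n + 1 : ℝ) - 1 = 2 * M + n by ring]
      field_simp
      ring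
    rw [hsub, show 64 * C / ((2 * M + n) / 6) ^ 2 = 2304 * C / (2 * M + n) ^ 2 by
      field_simp; ring]
    gcongr
    · linarith [h.C_nonneg]
    · nlinarith
  rw [Function.iterate_succ_apply', Function.iterate_succ_apply']
  calc _ = ‖(ρ (ρ^[n] u) - ρ^[n] u - 1) - (ρ (ρ^[n] v) - ρ^[n] v - 1)‖ := by ring_nf
    _ ≤ _ := hlip.trans (by gcongr)

end FatouSetup

noncomputable def fatouCoord (ρ : ℂ → ℂ) (b u : ℂ) : ℂ :=
  limUnder atTop fun n ↦ ρ^[n] u - ρ^[n] b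

theorem fatouCoord_self (ρ : ℂ → ℂ) (b : ℂ) : fatouCoord ρ b b = 0 := by
  simp only [fatouCoord, sub_self]
  exact tendsto_const_nhds.limUnder_eq

namespace FatouSetup

variable {ρ : ℂ → ℂ} {R C M : ℝ} {b u v : ℂ}

theorem tendsto_fatouCoord (h : FatouSetup ρ R C M) (hu : u ∈ petal M) (hb : b ∈ petal M) :
    Tendsto (fun n ↦ ρ^[n] u - ρ^[n] b) atTop (𝓝 (fatouCoord ρ b u)) :=
  (cauchySeq_of_norm_succ_sub_le h.antitone_fatouTail (tendsto_fatouTail C M)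
    (h.fatouTail_zero_le.trans (by norm_num)) (h.norm_iterate_sub_succ_le hu hb)).tendsto_limUnder

theorem tendsto_iterate_sub (h : FatouSetup ρ R C M) (hu : u ∈ petal M) (hv : v ∈ petal M)
    (hb : b ∈ petal M) : Tendsto (fun n ↦ ρ^[n] u - ρ^[n] v) atTop
      (𝓝 (fatouCoord ρ b u - fatouCoord ρ b v)) := by
  simpa using (h.tendsto_fatouCoord hu hb).sub (h.tendsto_fatouCoord hv hb)

theorem norm_fatouCoord_sub_sub_le (h : FatouSetup ρ R C M) (hu : u ∈ petal M)
    (hv : v ∈ petal M) (hb : b ∈ petal M) (n : ℕ) :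
    ‖(fatouCoord ρ b u - fatouCoord ρ b v) - (ρ^[n] u - ρ^[n] v)‖ ≤
      2 * ‖u - v‖ * fatouTail C M n := by
  simpa using norm_sub_le_of_tendsto_of_norm_succ_sub_le h.antitone_fatouTail
    (tendsto_fatouTail C M) (h.fatouTail_zero_le.trans (by norm_num))
    (h.norm_iterate_sub_succ_le hu hv) (h.tendsto_iterate_sub hu hv hb) n

theorem approximatesLinearOn_fatouCoord (h : FatouSetup ρ R C M) (hb : b ∈ petal M) :
    ApproximatesLinearOn (fatouCoord ρ b) (ContinuousLinearMap.id ℂ ℂ) (petal M) (1 / 2) :=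
  fun u hu v hv ↦ by
    have hbound := h.norm_fatouCoord_sub_sub_le hu hv hb 0
    simp only [Function.iterate_zero_apply] at hbound
    simp only [ContinuousLinearMap.id_apply, one_div, NNReal.coe_inv, NNReal.coe_ofNat]
    nlinarith [h.fatouTail_zero_le, norm_nonneg (u - v)]

theorem fatouCoord_apply (h : FatouSetup ρ R C M) (hu : u ∈ petal M) (hb : b ∈ petal M) :
    fatouCoord ρ b (ρ u) = fatouCoord ρ b u + 1 := by
  have hdefect : Tendsto (fun n ↦ ρ^[n + 1] u - ρ^[n] u - 1) atTop (𝓝 0) :=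
    squeeze_zero_norm (h.norm_iterate_succ_sub_sub_le hu) <| tendsto_const_nhds.div_atTop <|
      tendsto_atTop_add_const_left _ _ tendsto_natCast_atTop_atTop
  have hlim := h.tendsto_iterate_sub (h.mapsTo hu) hu hb
  simp only [← Function.iterate_succ_apply] at hlim
  have hstep := tendsto_nhds_unique hlim (by simpa using hdefect.add_const 1)
  linear_combination hstep

theorem differentiableOn_iterate (h : FatouSetup ρ R C M) (n : ℕ) :
    DifferentiableOn ℂ ρ^[n] (petal M) := by
  induction n with
  | zero => exact differentiableOn_id
  | succ n ih =>
    rw [Function.iterate_succ']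
    exact (h.differentiableOn.mono h.petal_subset).comp ih (h.mapsTo.iterate n)

theorem differentiableOn_fatouCoord (h : FatouSetup ρ R C M) (hb : b ∈ petal M) :
    DifferentiableOn ℂ (fatouCoord ρ b) (petal M) := by
  have hlim : TendstoLocallyUniformlyOn (fun n u ↦ ρ^[n] u - ρ^[n] b) (fatouCoord ρ b) atTop
      (petal M) := by
    refine tendstoLocallyUniformlyOn_iff.2 fun ε hε x _ ↦
      ⟨petal M ∩ ball x 1, inter_mem_nhdsWithin _ (ball_mem_nhds x one_pos), ?_⟩
    have hsmall : Tendsto (fun n ↦ 2 * (‖x - b‖ + 1) * fatouTail C M n) atTop (𝓝 0) := by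
      simpa using (tendsto_fatouTail C M).const_mul (2 * (‖x - b‖ + 1))
    filter_upwards [hsmall.eventually_lt_const hε] with n hn y ⟨hy, hyx⟩
    have hyb : ‖y - b‖ ≤ ‖x - b‖ + 1 := by
      rw [mem_ball, dist_eq_norm] at hyx
      linarith [norm_sub_le_norm_sub_add_norm_sub y x b]
    have htail := h.norm_fatouCoord_sub_sub_le hy hb hb n
    rw [fatouCoord_self, sub_zero] at htail
    rw [dist_eq_norm]
    calc _ ≤ 2 * ‖y - b‖ * fatouTail C M n := htail
      _ ≤ 2 * (‖x - b‖ + 1) * fatouTail C M n := by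
        gcongr; exact h.antitone_fatouTail.le_of_tendsto (tendsto_fatouTail C M) n
      _ < ε := hn
  exact hlim.differentiableOn (.of_forall fun n ↦ (h.differentiableOn_iterate n).sub_const _)
    (isOpen_petal M)

theorem norm_iterate_sub_sub_le (h : FatouSetup ρ R C M) (hu : u ∈ petal M) (hv : v ∈ petal M)
    (N : ℕ) : ‖(ρ^[N] u - ρ^[N] v) - (u - v)‖ ≤ 12 * C * Real.log (2 * M - 1 + N) := by
  have hM := h.one_le_M
  have hstep (k : ℕ) : dist (ρ^[k] u - ρ^[k] v) (ρ^[k + 1] u - ρ^[k + 1] v) ≤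
      12 * C * (2 * M - 1 + k + 1)⁻¹ := by
    rw [dist_comm, dist_eq_norm]
    calc _ = ‖(ρ^[k + 1] u - ρ^[k] u - 1) - (ρ^[k + 1] v - ρ^[k] v - 1)‖ := by ring_nf
      _ ≤ 6 * C / (2 * M + k) + 6 * C / (2 * M + k) :=
        (norm_sub_le _ _).trans (add_le_add (h.norm_iterate_succ_sub_sub_le hu k)
          (h.norm_iterate_succ_sub_sub_le hv k))
      _ = 12 * C * (2 * M - 1 + k + 1)⁻¹ := by ring_nf
  calc _ = dist (ρ^[0] u - ρ^[0] v) (ρ^[N] u - ρ^[N] v) := by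
        rw [dist_comm, dist_eq_norm]; rfl
    _ ≤ ∑ k ∈ Finset.range N, 12 * C * (2 * M - 1 + k + 1)⁻¹ :=
        (dist_le_range_sum_dist (fun n ↦ ρ^[n] u - ρ^[n] v) N).trans
          (Finset.sum_le_sum fun k _ ↦ hstep k)
    _ ≤ 12 * C * (Real.log (2 * M - 1 + N) - Real.log (2 * M - 1)) := by
        rw [← Finset.mul_sum]
        exact mul_le_mul_of_nonneg_left (sum_range_inv_add_le_log (by linarith) N)
          (by linarith [h.C_nonneg])
    _ ≤ 12 * C * Real.log (2 * M - 1 + N) := by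
        have hlog := Real.log_nonneg (show 1 ≤ 2 * M - 1 by linarith)
        nlinarith [h.C_nonneg]

theorem exists_norm_fatouCoord_sub_le (h : FatouSetup ρ R C M) (hb : b ∈ petal M) :
    ∃ A > 0, ∀ v ∈ petal M, ‖fatouCoord ρ b v - v‖ ≤ A * (1 + Real.log (1 + ‖v‖)) := by
  have hM := h.one_le_M
  have hC := h.C_nonneg
  have hlogb : 0 ≤ Real.log (2 * M + ‖b‖) := Real.log_nonneg (by linarith [norm_nonneg b])
  refine ⟨‖b‖ + 4608 * C + 12 * C * Real.log (2 * M + ‖b‖) + 1, by positivity, fun v hv ↦ ?_⟩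
  -- compare with the orbit at the time `N ≈ ‖v - b‖`, when the tail has become `O(1)`
  set N := ⌈‖v - b‖⌉₊
  have hN : ‖v - b‖ ≤ N := Nat.le_ceil _
  have hN' : (N : ℝ) < ‖v - b‖ + 1 := Nat.ceil_lt_add_one (norm_nonneg _)
  have htail : 2 * ‖v - b‖ * fatouTail C M N ≤ 4608 * C := by
    unfold fatouTail
    rw [mul_div_assoc', div_le_iff₀ (by linarith)]
    nlinarith [norm_nonneg (v - b)]
  have hlog : Real.log (2 * M - 1 + N) ≤ Real.log (2 * M + ‖b‖) + Real.log (1 + ‖v‖) := by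
    rw [← Real.log_mul (by positivity) (by positivity)]
    refine Real.log_le_log (by linarith) ?_
    nlinarith [norm_sub_le v b, norm_nonneg v, norm_nonneg b]
  have hsplit : fatouCoord ρ b v - v = ((fatouCoord ρ b v - fatouCoord ρ b b) -
      (ρ^[N] v - ρ^[N] b)) + ((ρ^[N] v - ρ^[N] b) - (v - b)) - b := by
    rw [fatouCoord_self]; ring
  have h1 := h.norm_fatouCoord_sub_sub_le hv hb hb N
  have h2 := h.norm_iterate_sub_sub_le hv hb N
  have hL : 0 ≤ Real.log (1 + ‖v‖) := Real.log_nonneg (by linarith [norm_nonneg v])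
  have h3 : 12 * C * Real.log (2 * M - 1 + N) ≤
      12 * C * (Real.log (2 * M + ‖b‖) + Real.log (1 + ‖v‖)) :=
    mul_le_mul_of_nonneg_left hlog (by linarith)
  have h4 : 0 ≤ (‖b‖ + 4596 * C + 12 * C * Real.log (2 * M + ‖b‖) + 1) * Real.log (1 + ‖v‖) :=
    mul_nonneg (by linarith [mul_nonneg hC hlogb, norm_nonneg b]) hL
  rw [hsplit]
  refine (norm_sub_le _ _).trans ((add_le_add (norm_add_le _ _) le_rfl).trans ?_)
  nlinarith

theorem eventually_fatouSector_subset_image (h : FatouSetup ρ R C M) (hb : b ∈ petal M) :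
    ∀ᶠ R' in atTop, fatouSector R' ⊆ fatouCoord ρ b '' petal M := by
  obtain ⟨A, -, hαA⟩ := h.exists_norm_fatouCoord_sub_le hb
  filter_upwards [eventually_ge_atTop (5 * M),
    eventually_forall_ge_atTop.2 (eventually_mul_one_add_log_le A (c := 1 / 20) (by norm_num))]
    with R' hR'M hR'log w hw
  have hball := closedBall_subset_petal (by linarith [h.one_le_M]) hR'M hw
  refine (h.approximatesLinearOn_fatouCoord hb).closedBall_subset_image (by positivity) hball ?_
  rw [mem_closedBall, dist_comm, dist_eq_norm]
  calc ‖fatouCoord ρ b w - w‖ ≤ A * (1 + Real.log (1 + ‖w‖)) :=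
        hαA w (hball (mem_closedBall_self (by positivity)))
    _ ≤ 1 / 20 * ‖w‖ := hR'log _ hw.1.le
    _ = (1 - ((1 / 2 : ℝ≥0) : ℝ)) * (‖w‖ / 10) := by norm_num; ring

end FatouSetup

/-- One-dimensional Fatou linearization at infinity: if
`ρ(u) = u + 1 + O(1/u)` is holomorphic for `|u| > R`, there is a holomorphic
injective `ψ` on a sector `S_{R'}`, of the form `ψ(u) = u + O(log u)`, with
`ψ⁻¹ ∘ ρ ∘ ψ (u) = u + 1`, i.e. `ρ(ψ(u)) = ψ(u+1)` on `S_{R'}`. -/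
theorem fatou_linearization_at_infinity (R : ℝ) (hR : 1 < R) (ρ : ℂ → ℂ)
    (hρhol : DifferentiableOn ℂ ρ {u : ℂ | R < ‖u‖})
    (C : ℝ) (hC : 0 < C)
    (hρ : ∀ u : ℂ, R < ‖u‖ →
      ‖ρ u - u - 1‖ ≤ C / ‖u‖) :
    ∃ R' ≥ R, ∃ ψ : ℂ → ℂ,
      DifferentiableOn ℂ ψ (fatouSector R') ∧
      Set.InjOn ψ (fatouSector R') ∧
      (∃ C' > (0 : ℝ), ∀ u ∈ fatouSector R',
        ‖ψ u - u‖ ≤ C' * (1 + ‖Complex.log u‖)) ∧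
      ∀ u ∈ fatouSector R', u + 1 ∈ fatouSector R' → ρ (ψ u) = ψ (u + 1) := by
  set M := 24 * R + 9216 * C + 1
  have h : FatouSetup ρ R C M := ⟨by linarith, hC.le, hρhol, hρ, by linarith, by linarith⟩
  set b : ℂ := ((M + 1 : ℝ) : ℂ)
  have hb : b ∈ petal M := by simp [b, petal, petalHeight]
  have hα := h.approximatesLinearOn_fatouCoord hb
  obtain ⟨A, hA, hαA⟩ := h.exists_norm_fatouCoord_sub_le hb
  obtain ⟨R', hR'R, hR'M, hsector⟩ := ((eventually_ge_atTop R).and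
    ((eventually_ge_atTop (5 * M)).and (h.eventually_fatouSector_subset_image hb))).exists
  obtain ⟨ψ, hψα, hψ_maps, hψ_diff⟩ := hα.exists_invOn_differentiableOn (by norm_num)
    (isOpen_petal M) (h.differentiableOn_fatouCoord hb)
  refine ⟨R', hR'R, ψ, hψ_diff.mono hsector, hψα.2.injOn.mono hsector,
    ⟨4 * A, by positivity, fun w hw ↦ ?_⟩, fun w hw _ ↦ ?_⟩
  · have hwM := closedBall_subset_petal (by linarith) hR'M hw (mem_closedBall_self (by positivity))
    have hψw := hα.one_sub_mul_norm_sub_le (hψ_maps (hsector hw)) hwM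
    rw [hψα.2 (hsector hw), norm_sub_rev w] at hψw
    calc ‖ψ w - w‖ ≤ 2 * ‖fatouCoord ρ b w - w‖ := by norm_num at hψw; linarith
      _ ≤ 2 * (A * (2 * (1 + ‖Complex.log w‖))) := by
        gcongr
        exact (hαA w hwM).trans
          (by gcongr; exact one_add_log_one_add_norm_le (by linarith [hw.1]))
      _ = 4 * A * (1 + ‖Complex.log w‖) := by ring
  · calc ρ (ψ w) = ψ (fatouCoord ρ b (ρ (ψ w))) :=
          (hψα.1 (h.mapsTo (hψ_maps (hsector hw)))).symm
      _ = ψ (w + 1) := by rw [h.fatouCoord_apply (hψ_maps (hsector hw)) hb, hψα.2 (hsector hw)]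
end
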